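/- arXiv:2205.10301 — 7 statements merged into one kernel-verified Lean document; each statement's English description precedes it below -/
import Mathlib

section
/- Let A be an n×n real matrix and let m be a positive natural number. Then tr(A^(2m)) ≤ tr((A·Aᵀ)^m), where Aᵀ denotes the transpose of A. -/
/-!
Over `ℂ`, Schur's theorem makes `A` unitarily similar to an upper triangular `S`, and the
similarity preserves `tr A^(2m)` and `tr (A A*)^m`. Now `tr S^(2m) = Σ Sᵢᵢ^(2m)` has real part at
most `Σ (|Sᵢᵢ|²)^m ≤ Σ ((S S*)ᵢᵢ)^m`, as `(S S*)ᵢᵢ = Σⱼ |Sᵢⱼ|²`. Finally, writing the positive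
semidefinite `H = S S*` as `U diag(λ) U*`, each `Hᵢᵢ = Σₖ |Uᵢₖ|² λₖ` is a convex combination of
the eigenvalues, so Jensen's inequality for `t ↦ t^m` gives `Hᵢᵢ^m ≤ (H^m)ᵢᵢ`.
-/

open Matrix Module LinearMap
open scoped ComplexOrder

namespace Matrix

variable {n R 𝕜 : Type*} [Fintype n]

lemma IsUpperTriangular.diag_mul [LinearOrder n] [NonUnitalNonAssocSemiring R]
    {M N : Matrix n n R} (hM : M.IsUpperTriangular) (hN : N.IsUpperTriangular) :
    (M * N).diag = M.diag * N.diag := by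
  ext i
  refine (Finset.sum_eq_single i (fun k _ hki => ?_) (by simp)).trans rfl
  change M i k * N k i = 0
  rcases hki.lt_or_gt with hki | hik
  · rw [hM hki, zero_mul]
  · rw [hN hik, mul_zero]

lemma IsUpperTriangular.diag_pow [LinearOrder n] [DecidableEq n] [Semiring R]
    {M : Matrix n n R} (hM : M.IsUpperTriangular) (k : ℕ) : (M ^ k).diag = M.diag ^ k := by
  induction k with
  | zero => ext; simp
  | succ k ih => rw [pow_succ, IsUpperTriangular.diag_mul (hM.pow k) hM, ih, pow_succ]

lemma IsUpperTriangular.trace_pow [LinearOrder n] [DecidableEq n] [Semiring R]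
    {M : Matrix n n R} (hM : M.IsUpperTriangular) (k : ℕ) :
    (M ^ k).trace = ∑ i, M i i ^ k := by
  simp only [trace]
  exact Finset.sum_congr rfl fun i _ => congrFun (hM.diag_pow k) i

section RCLike

variable [RCLike 𝕜]

open RCLike

lemma sq_norm_apply_le_re_mul_conjTranspose_apply_self (M : Matrix n n 𝕜) (i j : n) :
    ‖M i j‖ ^ 2 ≤ re ((M * Mᴴ) i i) := by
  have hdiag : re ((M * Mᴴ) i i) = ∑ k, ‖M i k‖ ^ 2 := by
    simp only [mul_apply, conjTranspose_apply, RCLike.star_def, RCLike.mul_conj, map_sum]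
    simp
  rw [hdiag]
  exact Finset.single_le_sum (fun k _ => sq_nonneg ‖M i k‖) (Finset.mem_univ j)

lemma IsHermitian.re_pow_apply_self [DecidableEq n] {A : Matrix n n 𝕜} (hA : A.IsHermitian)
    (k : ℕ) (i : n) :
    re ((A ^ k) i i) =
      ∑ j, ‖(hA.eigenvectorUnitary : Matrix n n 𝕜) i j‖ ^ 2 * hA.eigenvalues j ^ k := by
  conv_lhs => rw [hA.spectral_theorem, ← map_pow, diagonal_pow, Unitary.conjStarAlgAut_apply]
  rw [mul_apply, map_sum]
  refine Finset.sum_congr rfl fun j _ => ?_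
  rw [mul_diagonal, star_apply, RCLike.star_def, mul_right_comm, RCLike.mul_conj]
  simp only [Pi.pow_apply, Function.comp_apply]
  rw [← ofReal_pow, ← ofReal_pow, ← ofReal_mul, ofReal_re, mul_comm]

lemma PosSemidef.re_apply_self_pow_le [DecidableEq n] {H : Matrix n n 𝕜} (hH : H.PosSemidef)
    (i : n) (m : ℕ) : re (H i i) ^ m ≤ re ((H ^ m) i i) := by
  have hdiag := hH.1.re_pow_apply_self (i := i)
  set w := fun j => ‖(hH.1.eigenvectorUnitary : Matrix n n 𝕜) i j‖ ^ 2
  have hw : ∑ j, w j = 1 := by simpa [w] using (hdiag 0).symm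
  calc re (H i i) ^ m = (∑ j, w j * hH.1.eigenvalues j) ^ m := by
        simpa [w] using congrArg (· ^ m) (hdiag 1)
    _ ≤ ∑ j, w j * hH.1.eigenvalues j ^ m :=
        Real.pow_arith_mean_le_arith_mean_pow _ _ _ (fun j _ => sq_nonneg _) hw
          (fun j _ => hH.eigenvalues_nonneg j) m
    _ = re ((H ^ m) i i) := (hdiag m).symm

lemma IsUpperTriangular.re_trace_pow_two_mul_le [LinearOrder n] [DecidableEq n]
    {S : Matrix n n 𝕜} (hS : S.IsUpperTriangular) (m : ℕ) :
    re (S ^ (2 * m)).trace ≤ re ((S * Sᴴ) ^ m).trace := by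
  calc re (S ^ (2 * m)).trace = ∑ i, re (S i i ^ (2 * m)) := by rw [hS.trace_pow, map_sum]
    _ ≤ ∑ i, (‖S i i‖ ^ 2) ^ m := by
        gcongr with i
        exact (re_le_norm _).trans (by rw [norm_pow, pow_mul])
    _ ≤ ∑ i, re ((S * Sᴴ) i i) ^ m := by
        gcongr with i
        exact S.sq_norm_apply_le_re_mul_conjTranspose_apply_self i i
    _ ≤ ∑ i, re (((S * Sᴴ) ^ m) i i) := by
        gcongr with i
        exact (posSemidef_self_mul_conjTranspose S).re_apply_self_pow_le i m
    _ = re ((S * Sᴴ) ^ m).trace := by rw [trace, map_sum]; rfl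

end RCLike

end Matrix

section InnerProductSpace

variable {𝕜 E : Type*} [RCLike 𝕜] [NormedAddCommGroup E] [InnerProductSpace 𝕜 E]

lemma OrthonormalBasis.orthonormal_snoc {n : ℕ} {u : E} (b : OrthonormalBasis (Fin n) 𝕜 (𝕜 ∙ u)ᗮ)
    (hu : ‖u‖ = 1) : Orthonormal 𝕜 (Fin.snoc (α := fun _ => E) (fun i => (b i : E)) u) := by
  rw [orthonormal_iff_ite]
  intro i j
  induction i using Fin.lastCases <;> induction j using Fin.lastCases
  case last.last => simp [hu]
  case last.cast j =>
    simpa [(Fin.castSucc_lt_last j).ne'] using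
      Submodule.mem_orthogonal_singleton_iff_inner_right.mp (b j).2
  case cast.last i =>
    simpa [(Fin.castSucc_lt_last i).ne] using
      Submodule.mem_orthogonal_singleton_iff_inner_left.mp (b i).2
  case cast.cast i j =>
    simpa [← Submodule.coe_inner] using orthonormal_iff_ite.mp b.orthonormal i j

namespace LinearMap

variable [FiniteDimensional 𝕜 E]

lemma apply_mem_orthogonal_span_singleton {T : E →ₗ[𝕜] E} {u : E} {μ : 𝕜}
    (hu : adjoint T u = μ • u) {x : E} (hx : x ∈ (𝕜 ∙ u)ᗮ) : T x ∈ (𝕜 ∙ u)ᗮ := by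
  rw [Submodule.mem_orthogonal_singleton_iff_inner_right] at hx ⊢
  rw [← adjoint_inner_left, hu, inner_smul_left, hx, mul_zero]

theorem exists_orthonormalBasis_isUpperTriangular [IsAlgClosed 𝕜] (T : E →ₗ[𝕜] E) :
    ∃ b : OrthonormalBasis (Fin (finrank 𝕜 E)) 𝕜 E,
      (toMatrixOrthonormal b T).IsUpperTriangular := by
  suffices h : ∀ (n : ℕ) (E : Type _) [NormedAddCommGroup E] [InnerProductSpace 𝕜 E]
      [FiniteDimensional 𝕜 E], finrank 𝕜 E = n → ∀ T : E →ₗ[𝕜] E,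
      ∃ b : OrthonormalBasis (Fin n) 𝕜 E, (toMatrixOrthonormal b T).IsUpperTriangular from
    h _ E rfl T
  -- The orthogonal complement of an eigenvector `u` of `T†` is `T`-invariant: triangularize `T`
  -- there and append `u` as the last basis vector.
  intro n
  induction n with
  | zero =>
    intro E _ _ _ hn T
    exact ⟨(stdOrthonormalBasis 𝕜 E).reindex (finCongr hn), fun i => i.elim0⟩
  | succ n ih =>
    intro E _ _ _ hn T
    have : Nontrivial E := Module.nontrivial_of_finrank_eq_succ hn
    have : Fact (finrank 𝕜 E = n + 1) := ⟨hn⟩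
    obtain ⟨μ, hμ⟩ := Module.End.exists_eigenvalue (adjoint T)
    obtain ⟨v, hv⟩ := hμ.exists_hasEigenvector
    set u : E := (‖v‖⁻¹ : 𝕜) • v
    have hu : ‖u‖ = 1 := norm_smul_inv_norm hv.2
    have hTu : adjoint T u = μ • u := by rw [map_smul, hv.apply_eq_smul, smul_comm]
    have hK : ∀ x ∈ (𝕜 ∙ u)ᗮ, T x ∈ (𝕜 ∙ u)ᗮ := fun x => apply_mem_orthogonal_span_singleton hTu
    have hK_dim : finrank 𝕜 (𝕜 ∙ u)ᗮ = n :=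
      Submodule.finrank_orthogonal_span_singleton (norm_ne_zero_iff.mp (hu ▸ one_ne_zero))
    obtain ⟨b', hb'⟩ := ih _ hK_dim (T.restrict hK)
    set w : Fin (n + 1) → E := Fin.snoc (α := fun _ => E) (fun i => (b' i : E)) u
    have hw : Orthonormal 𝕜 w := b'.orthonormal_snoc hu
    let b := (basisOfOrthonormalOfCardEqFinrank hw (by simp [hn])).toOrthonormalBasis
      (by simpa using hw)
    have hb : ⇑b = w := by simp [b]
    refine ⟨b, fun i j hji => ?_⟩
    rw [toMatrixOrthonormal_apply_apply, hb]
    induction j using Fin.lastCases with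
    | last => exact absurd hji (not_lt.mpr (Fin.le_last i))
    | cast j =>
      induction i using Fin.lastCases with
      | last =>
        simpa [w] using Submodule.mem_orthogonal_singleton_iff_inner_right.mp (hK _ (b' j).2)
      | cast i =>
        have := hb' (Fin.castSucc_lt_castSucc_iff.mp hji)
        rw [toMatrixOrthonormal_apply_apply, Submodule.coe_inner, coe_restrict_apply] at this
        simpa [w] using this

lemma trace_eq_trace_toMatrixOrthonormal {ι : Type*} [Fintype ι] [DecidableEq ι]
    (b : OrthonormalBasis ι 𝕜 E) (f : E →ₗ[𝕜] E) :
    trace 𝕜 E f = (toMatrixOrthonormal b f).trace :=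
  trace_eq_matrix_trace 𝕜 b.toBasis f

theorem re_trace_pow_two_mul_le [IsAlgClosed 𝕜] (T : E →ₗ[𝕜] E) (m : ℕ) :
    RCLike.re (trace 𝕜 E (T ^ (2 * m))) ≤ RCLike.re (trace 𝕜 E ((T * star T) ^ m)) := by
  obtain ⟨b, hb⟩ := exists_orthonormalBasis_isUpperTriangular T
  rw [trace_eq_trace_toMatrixOrthonormal b, trace_eq_trace_toMatrixOrthonormal b, map_pow,
    map_pow, map_mul, map_star]
  exact hb.re_trace_pow_two_mul_le m

end LinearMap

end InnerProductSpace

theorem Matrix.re_trace_pow_two_mul_le {n 𝕜 : Type*} [Fintype n] [DecidableEq n] [RCLike 𝕜]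
    [IsAlgClosed 𝕜] (M : Matrix n n 𝕜) (m : ℕ) :
    RCLike.re (M ^ (2 * m)).trace ≤ RCLike.re ((M * Mᴴ) ^ m).trace := by
  let e := EuclideanSpace.basisFun n 𝕜
  have := (toMatrixOrthonormal e).symm M |>.re_trace_pow_two_mul_le m
  rwa [trace_eq_trace_toMatrixOrthonormal e, trace_eq_trace_toMatrixOrthonormal e, map_pow,
    map_pow, map_mul, map_star, StarAlgEquiv.apply_symm_apply] at this

theorem stmt_0_general (n : ℕ) (A : Matrix (Fin n) (Fin n) ℝ) (m : ℕ) :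
    Matrix.trace (A ^ (2 * m)) ≤ Matrix.trace ((A * Aᵀ) ^ m) := by
  have key := (Complex.ofRealHom.mapMatrix A).re_trace_pow_two_mul_le m
  have hstar : (Complex.ofRealHom.mapMatrix A)ᴴ = Complex.ofRealHom.mapMatrix Aᵀ := by
    ext
    simp
  rw [hstar, ← map_mul, ← map_pow, ← map_pow, RingHom.mapMatrix_apply, RingHom.mapMatrix_apply,
    ← AddMonoidHom.map_trace, ← AddMonoidHom.map_trace] at key
  simpa using key

/-- For any real square matrix `A` and positive natural `m`,
`tr(A^(2m)) ≤ tr((A * Aᵀ)^m)`. -/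
theorem stmt_0 (n : ℕ) (A : Matrix (Fin n) (Fin n) ℝ) (m : ℕ) (hm : 0 < m) :
    Matrix.trace (A ^ (2 * m)) ≤ Matrix.trace ((A * Aᵀ) ^ m) :=
  stmt_0_general n A m
end

section
/- Let X and Y be symmetric n×n real matrices and let k be a positive natural number. Then tr((XY)^(2^k)) ≤ tr(X^(2^k)·Y^(2^k)). -/
/-!
Induct on `k`, simultaneously with the companion inequality `tr(M^(2^(k+1))) ≤ tr((M Mᵀ)^(2^k))`
for arbitrary square `M`. Applying the companion inequality to `M = XY` gives
`tr((XY)^(2^(k+1))) ≤ tr((X²Y²)^(2^k))`, to which the induction hypothesis for `X², Y²` applies.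
Applying it to `M²` and then the induction hypothesis to the symmetric pair `C = M Mᵀ`, `D = Mᵀ M`
gives `tr(M^(2^(k+2))) ≤ tr(C^(2^k) D^(2^k))`, and `2 tr(C^r D^r) ≤ tr(C^(2r)) + tr(D^(2r))`
(the square `tr((C^r - D^r)²)` is nonnegative) closes the induction, since `C` and `D` have equal
power traces.
-/

open Matrix

namespace Matrix

section Trace

variable {m n R : Type*} [Fintype m] [Fintype n]

theorem trace_pow_mul_comm [CommSemiring R] [DecidableEq n] (A B : Matrix n n R) (r : ℕ) :
    trace ((A * B) ^ r) = trace ((B * A) ^ r) := by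
  cases r with
  | zero => rfl
  | succ r =>
    rw [pow_succ, ← mul_assoc, mul_pow_mul, mul_assoc, trace_mul_comm, mul_assoc, ← pow_succ]

variable [CommRing R] [LinearOrder R] [IsStrictOrderedRing R]

theorem trace_mul_transpose_self_nonneg (A : Matrix m n R) : 0 ≤ trace (A * Aᵀ) := by
  simp only [trace, diag, mul_apply, transpose_apply]
  exact Finset.sum_nonneg fun i _ => Finset.sum_nonneg fun j _ => mul_self_nonneg (A i j)

theorem two_mul_trace_mul_transpose_le (A B : Matrix m n R) :
    2 * trace (A * Bᵀ) ≤ trace (A * Aᵀ) + trace (B * Bᵀ) := by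
  have h := trace_mul_transpose_self_nonneg (A - B)
  have hBA : trace (B * Aᵀ) = trace (A * Bᵀ) := by
    rw [← trace_transpose, transpose_mul, transpose_transpose]
  simp only [transpose_sub, Matrix.sub_mul, Matrix.mul_sub, trace_sub, hBA] at h
  linarith

theorem trace_mul_self_le_trace_mul_transpose (M : Matrix n n R) :
    trace (M * M) ≤ trace (M * Mᵀ) := by
  have h := two_mul_trace_mul_transpose_le M Mᵀ
  rw [transpose_transpose, trace_mul_comm Mᵀ M] at h
  linarith

theorem IsSymm.two_mul_trace_mul_le {C D : Matrix n n R} (hC : C.IsSymm) (hD : D.IsSymm) :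
    2 * trace (C * D) ≤ trace (C * C) + trace (D * D) := by
  simpa only [hC.eq, hD.eq] using two_mul_trace_mul_transpose_le C D

end Trace

section PowTwoPow

variable (n R : Type*) [Fintype n] [DecidableEq n] [CommRing R] [LinearOrder R]

def TracePowMulLE (s : ℕ) : Prop :=
  ∀ A B : Matrix n n R, A.IsSymm → B.IsSymm →
    trace ((A * B) ^ 2 ^ s) ≤ trace (A ^ 2 ^ s * B ^ 2 ^ s)

def TracePowLEGram (s : ℕ) : Prop :=
  ∀ M : Matrix n n R, trace (M ^ 2 ^ (s + 1)) ≤ trace ((M * Mᵀ) ^ 2 ^ s)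

variable {n R} {s : ℕ}

theorem TracePowMulLE.succ (hP : TracePowMulLE n R s) (hQ : TracePowLEGram n R s) :
    TracePowMulLE n R (s + 1) := by
  intro A B hA hB
  calc trace ((A * B) ^ 2 ^ (s + 1))
      ≤ trace ((A * B * (A * B)ᵀ) ^ 2 ^ s) := hQ (A * B)
    _ = trace ((A ^ 2 * B ^ 2) ^ 2 ^ s) := by
      rw [transpose_mul, hA.eq, hB.eq, ← mul_assoc, trace_pow_mul_comm _ A]
      simp only [sq, mul_assoc]
    _ ≤ trace ((A ^ 2) ^ 2 ^ s * (B ^ 2) ^ 2 ^ s) := hP _ _ (hA.pow 2) (hB.pow 2)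
    _ = trace (A ^ 2 ^ (s + 1) * B ^ 2 ^ (s + 1)) := by
      rw [← pow_mul, ← pow_mul, ← pow_succ']

theorem TracePowLEGram.succ [IsStrictOrderedRing R] (hP : TracePowMulLE n R s)
    (hQ : TracePowLEGram n R s) :
    TracePowLEGram n R (s + 1) := by
  intro M
  set C := M * Mᵀ
  set D := Mᵀ * M
  have hCD : trace (C ^ 2 ^ s * D ^ 2 ^ s) ≤ trace (C ^ 2 ^ (s + 1)) := by
    have h := (isSymm_mul_transpose_self M |>.pow (2 ^ s)).two_mul_trace_mul_le
      (isSymm_transpose_mul_self M |>.pow (2 ^ s))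
    rw [← pow_add, ← pow_add, ← two_mul, ← pow_succ', trace_pow_mul_comm Mᵀ M] at h
    linarith
  calc trace (M ^ 2 ^ (s + 1 + 1))
      = trace ((M ^ 2) ^ 2 ^ (s + 1)) := by rw [← pow_mul, ← pow_succ']
    _ ≤ trace ((M ^ 2 * (M ^ 2)ᵀ) ^ 2 ^ s) := hQ (M ^ 2)
    _ = trace ((C * D) ^ 2 ^ s) := by
      rw [transpose_pow, sq, sq, mul_assoc, trace_pow_mul_comm]
      simp only [C, D, mul_assoc]
    _ ≤ trace (C ^ 2 ^ s * D ^ 2 ^ s) :=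
      hP C D (isSymm_mul_transpose_self M) (isSymm_transpose_mul_self M)
    _ ≤ trace (C ^ 2 ^ (s + 1)) := hCD

theorem tracePowMulLE_and_tracePowLEGram [IsStrictOrderedRing R] (s : ℕ) :
    TracePowMulLE n R s ∧ TracePowLEGram n R s := by
  induction s with
  | zero =>
    refine ⟨fun A B _ _ => by simp, fun M => ?_⟩
    simpa only [zero_add, pow_one, pow_zero, sq] using trace_mul_self_le_trace_mul_transpose M
  | succ s ih => exact ⟨ih.1.succ ih.2, TracePowLEGram.succ ih.1 ih.2⟩

end PowTwoPow

end Matrix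

theorem stmt_1_general (n : ℕ) (X Y : Matrix (Fin n) (Fin n) ℝ)
    (hX : X.IsSymm) (hY : Y.IsSymm) (k : ℕ) :
    Matrix.trace ((X * Y) ^ (2 ^ k)) ≤ Matrix.trace (X ^ (2 ^ k) * Y ^ (2 ^ k)) :=
  (tracePowMulLE_and_tracePowLEGram k).1 X Y hX hY

/-- For symmetric real matrices `X, Y` and positive `k`,
`tr((XY)^(2^k)) ≤ tr(X^(2^k) * Y^(2^k))`. -/
theorem stmt_1 (n : ℕ) (X Y : Matrix (Fin n) (Fin n) ℝ)
    (hX : X.IsSymm) (hY : Y.IsSymm) (k : ℕ) (hk : 0 < k) :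
    Matrix.trace ((X * Y) ^ (2 ^ k)) ≤ Matrix.trace (X ^ (2 ^ k) * Y ^ (2 ^ k)) :=
  stmt_1_general n X Y hX hY k
end

section
/- (Symmetric Rearrangement) Let X and Y be symmetric n×n real matrices and let k be a positive natural number. Then tr((X·Y·X)^(2^k)) ≤ tr(X^(2^k)·Y^(2^k)·X^(2^k)). -/
/-!
For symmetric `A`, `B` and `m = 2 ^ j` one shows `tr((AB)^m) ≤ tr(A^m B^m)` by induction on `j`,
together with `tr(N^(2m)) ≤ tr((NᵀN)^m)` for arbitrary `N`. Both steps rest on the positivity of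
the trace form, `2 tr(PᵀQ) ≤ tr(PᵀP) + tr(QᵀQ)`, and on cyclicity of the trace:
`tr((AB)^(2m)) ≤ tr(((AB)ᵀAB)^m) = tr((A²B²)^m)`, and with `S = NᵀN`, `R = NNᵀ`,
`tr(N^(4m)) ≤ tr((SR)^m) ≤ tr(S^m R^m) ≤ (tr(S^(2m)) + tr(R^(2m))) / 2 = tr(S^(2m))`.
The theorem is the case `A = X²`, `B = Y`, since `tr((XYX)^m) = tr((X²Y)^m)`.
-/

open Matrix

namespace Matrix

variable {m n : Type*} [Fintype m] [Fintype n]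

theorem trace_mul_pow_comm {R : Type*} [CommRing R] [DecidableEq m] (U V : Matrix m m R)
    (k : ℕ) : ((U * V) ^ k).trace = ((V * U) ^ k).trace := by
  cases k with
  | zero => rfl
  | succ k => rw [pow_succ, ← mul_assoc, trace_mul_comm, mul_pow_mul, ← mul_assoc,
      ← pow_succ']

theorem trace_transpose_mul_self_nonneg (A : Matrix m n ℝ) : 0 ≤ (Aᵀ * A).trace := by
  simpa using (posSemidef_conjTranspose_mul_self A).trace_nonneg

theorem two_mul_trace_transpose_mul_le (P Q : Matrix m n ℝ) :
    2 * (Pᵀ * Q).trace ≤ (Pᵀ * P).trace + (Qᵀ * Q).trace := by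
  have hPQ := trace_transpose_mul_self_nonneg (P - Q)
  have hswap : (Qᵀ * P).trace = (Pᵀ * Q).trace := by
    rw [← trace_transpose, transpose_mul, transpose_transpose]
  simp only [transpose_sub, Matrix.sub_mul, Matrix.mul_sub, trace_sub] at hPQ
  linarith

theorem trace_mul_self_le_trace_transpose_mul_self (A : Matrix m m ℝ) :
    (A * A).trace ≤ (Aᵀ * A).trace := by
  have h := two_mul_trace_transpose_mul_le Aᵀ A
  rw [transpose_transpose, trace_mul_comm A Aᵀ] at h
  linarith

theorem IsSymm.two_mul_trace_mul_le_s2 {P Q : Matrix m m ℝ} (hP : P.IsSymm) (hQ : Q.IsSymm) :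
    2 * (P * Q).trace ≤ (P * P).trace + (Q * Q).trace := by
  simpa only [hP.eq, hQ.eq] using two_mul_trace_transpose_mul_le P Q

variable [DecidableEq m]

theorem IsSymm.trace_mul_pow_two_pow_succ_le {j : ℕ}
    (hsq : ∀ N : Matrix m m ℝ, (N ^ 2 ^ (j + 1)).trace ≤ ((Nᵀ * N) ^ 2 ^ j).trace)
    (hsymm : ∀ A B : Matrix m m ℝ, A.IsSymm → B.IsSymm →
      ((A * B) ^ 2 ^ j).trace ≤ (A ^ 2 ^ j * B ^ 2 ^ j).trace)
    {A B : Matrix m m ℝ} (hA : A.IsSymm) (hB : B.IsSymm) :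
    ((A * B) ^ 2 ^ (j + 1)).trace ≤ (A ^ 2 ^ (j + 1) * B ^ 2 ^ (j + 1)).trace := by
  have hAA : (A * A).IsSymm := by simpa only [sq] using hA.pow 2
  have hBB : (B * B).IsSymm := by simpa only [sq] using hB.pow 2
  calc ((A * B) ^ 2 ^ (j + 1)).trace
      ≤ (((A * B)ᵀ * (A * B)) ^ 2 ^ j).trace := hsq (A * B)
    _ = ((B * (A * A * B)) ^ 2 ^ j).trace := by
      simp only [transpose_mul, hA.eq, hB.eq, Matrix.mul_assoc]
    _ = ((A * A * (B * B)) ^ 2 ^ j).trace := by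
      rw [trace_mul_pow_comm, Matrix.mul_assoc (A * A)]
    _ ≤ ((A * A) ^ 2 ^ j * (B * B) ^ 2 ^ j).trace := hsymm _ _ hAA hBB
    _ = (A ^ 2 ^ (j + 1) * B ^ 2 ^ (j + 1)).trace := by
      rw [← sq, ← sq, ← pow_mul, ← pow_mul, ← pow_succ']

theorem trace_pow_two_pow_succ_succ_le {j : ℕ}
    (hsq : ∀ N : Matrix m m ℝ, (N ^ 2 ^ (j + 1)).trace ≤ ((Nᵀ * N) ^ 2 ^ j).trace)
    (hsymm : ∀ A B : Matrix m m ℝ, A.IsSymm → B.IsSymm →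
      ((A * B) ^ 2 ^ j).trace ≤ (A ^ 2 ^ j * B ^ 2 ^ j).trace)
    (N : Matrix m m ℝ) :
    (N ^ 2 ^ (j + 2)).trace ≤ ((Nᵀ * N) ^ 2 ^ (j + 1)).trace := by
  set S := Nᵀ * N
  set R := N * Nᵀ
  have hS : (S ^ 2 ^ j).IsSymm := (isSymm_transpose_mul_self N).pow _
  have hR : (R ^ 2 ^ j).IsSymm := (isSymm_mul_transpose_self N).pow _
  have hRS : (R ^ 2 ^ j * R ^ 2 ^ j).trace = (S ^ 2 ^ j * S ^ 2 ^ j).trace := by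
    rw [← pow_add, ← pow_add]
    exact trace_mul_pow_comm N Nᵀ _
  have hCS := hS.two_mul_trace_mul_le_s2 hR
  calc (N ^ 2 ^ (j + 2)).trace
      = ((N * N) ^ 2 ^ (j + 1)).trace := by rw [← sq, ← pow_mul, ← pow_succ']
    _ ≤ (((N * N)ᵀ * (N * N)) ^ 2 ^ j).trace := hsq (N * N)
    _ = ((Nᵀ * (Nᵀ * N * N)) ^ 2 ^ j).trace := by
      simp only [transpose_mul, Matrix.mul_assoc]
    _ = ((S * R) ^ 2 ^ j).trace := by
      rw [trace_mul_pow_comm, Matrix.mul_assoc S]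
    _ ≤ (S ^ 2 ^ j * R ^ 2 ^ j).trace := hsymm _ _ (isSymm_transpose_mul_self N)
      (isSymm_mul_transpose_self N)
    _ ≤ (S ^ 2 ^ j * S ^ 2 ^ j).trace := by linarith
    _ = (S ^ 2 ^ (j + 1)).trace := by rw [← pow_add, ← two_mul, ← pow_succ']

theorem IsSymm.trace_mul_pow_two_pow_le {A B : Matrix m m ℝ} (hA : A.IsSymm) (hB : B.IsSymm)
    (j : ℕ) : ((A * B) ^ 2 ^ j).trace ≤ (A ^ 2 ^ j * B ^ 2 ^ j).trace := by
  suffices h : (∀ N : Matrix m m ℝ, (N ^ 2 ^ (j + 1)).trace ≤ ((Nᵀ * N) ^ 2 ^ j).trace) ∧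
      ∀ A B : Matrix m m ℝ, A.IsSymm → B.IsSymm →
        ((A * B) ^ 2 ^ j).trace ≤ (A ^ 2 ^ j * B ^ 2 ^ j).trace from h.2 A B hA hB
  induction j with
  | zero => exact ⟨fun N => by simpa [sq] using trace_mul_self_le_trace_transpose_mul_self N,
      fun _ _ _ _ => by simp⟩
  | succ j ih => exact ⟨trace_pow_two_pow_succ_succ_le ih.1 ih.2,
      fun _ _ => IsSymm.trace_mul_pow_two_pow_succ_le ih.1 ih.2⟩

end Matrix

theorem stmt_2_general (n : ℕ) (X Y : Matrix (Fin n) (Fin n) ℝ)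
    (hX : X.IsSymm) (hY : Y.IsSymm) (k : ℕ) :
    Matrix.trace ((X * Y * X) ^ (2 ^ k)) ≤
      Matrix.trace (X ^ (2 ^ k) * Y ^ (2 ^ k) * X ^ (2 ^ k)) := by
  have hXX : (X * X).IsSymm := by simpa only [sq] using hX.pow 2
  calc ((X * Y * X) ^ 2 ^ k).trace = ((X * X * Y) ^ 2 ^ k).trace := by
        rw [trace_mul_pow_comm, Matrix.mul_assoc]
    _ ≤ ((X * X) ^ 2 ^ k * Y ^ 2 ^ k).trace := hXX.trace_mul_pow_two_pow_le hY k
    _ = (X ^ 2 ^ k * Y ^ 2 ^ k * X ^ 2 ^ k).trace := by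
      rw [(Commute.refl X).mul_pow, trace_mul_comm (X ^ 2 ^ k * Y ^ 2 ^ k), Matrix.mul_assoc]

/-- Symmetric rearrangement: for symmetric real matrices `X, Y` and positive `k`,
`tr((XYX)^(2^k)) ≤ tr(X^(2^k) * Y^(2^k) * X^(2^k))`. -/
theorem stmt_2 (n : ℕ) (X Y : Matrix (Fin n) (Fin n) ℝ)
    (hX : X.IsSymm) (hY : Y.IsSymm) (k : ℕ) (hk : 0 < k) :
    Matrix.trace ((X * Y * X) ^ (2 ^ k)) ≤
      Matrix.trace (X ^ (2 ^ k) * Y ^ (2 ^ k) * X ^ (2 ^ k)) :=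
  stmt_2_general n X Y hX hY k
end

section
/- (Estimating Expansion) Let m ≥ 1, let F be a symmetric doubly stochastic m×m real matrix, let A ⊆ [m] be nonempty with k = |A|, and let Δ_A = I_A − (1/k)·𝟙_A·𝟙_Aᵀ. Assume that the largest singular value of Δ_A·F·Δ_A is at most 1/100. Then for every nonempty subset S ⊆ A with |S| ≤ (6/7)·|A|, the weighted cut satisfies Σ_{u∈S, v∉S} F(u,v) ≥ |S|/100. In other words, A is a strong near (6/7, 1/100)-edge-expander in the weighted graph whose adjacency matrix is F. -/
/-!
With `x = 𝟙_S` and `t = |S|/|A|`, one has `Δ_A x = x - t·𝟙_A`, so the singular value bound gives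
`(x - t𝟙_A)ᵀ F (x - t𝟙_A) ≤ |S|/100`. Expanding, and using `xᵀF𝟙_A ≤ 𝟙_AᵀF𝟙_A` and
`xᵀF𝟙_A ≤ |S|` (nonnegativity and row sums), gives `xᵀFx ≤ |S|/100 + t(2-t)|S|`. The cut equals
`|S| - xᵀFx ≥ (1-t)²|S| - |S|/100`, and `t ≤ 6/7` makes `(1-t)² ≥ 1/49 ≥ 2/100`.
-/

open Matrix

/-- The `m × m` matrix `Δ_A = I_A − (1/|A|)·𝟙_A 𝟙_Aᵀ` for a subset `A ⊆ [m]`. -/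
noncomputable def DeltaA (m : ℕ) (A : Finset (Fin m)) : Matrix (Fin m) (Fin m) ℝ :=
  Matrix.diagonal (fun i => if i ∈ A then (1 : ℝ) else 0)
    - ((A.card : ℝ)⁻¹) • Matrix.vecMulVec (fun i => if i ∈ A then (1 : ℝ) else 0)
        (fun i => if i ∈ A then (1 : ℝ) else 0)

open Finset

section IndicatorVec

variable {ι : Type*} [DecidableEq ι]

def indicatorVec (S : Finset ι) : ι → ℝ := fun i => if i ∈ S then 1 else 0

lemma indicatorVec_mul_of_subset {S A : Finset ι} (h : S ⊆ A) (i : ι) :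
    indicatorVec A i * indicatorVec S i = indicatorVec S i := by
  by_cases hi : i ∈ S
  · simp [indicatorVec, hi, h hi]
  · simp [indicatorVec, hi]

variable [Fintype ι]

lemma indicatorVec_dotProduct (S : Finset ι) (v : ι → ℝ) :
    indicatorVec S ⬝ᵥ v = ∑ i ∈ S, v i := by
  simp [indicatorVec, dotProduct]

lemma indicatorVec_dotProduct_mulVec_indicatorVec (M : Matrix ι ι ℝ) (S T : Finset ι) :
    indicatorVec S ⬝ᵥ M *ᵥ indicatorVec T = ∑ u ∈ S, ∑ v ∈ T, M u v := by
  rw [indicatorVec_dotProduct]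
  simp [mulVec, dotProduct, indicatorVec]

lemma sum_indicatorVec_sq (S : Finset ι) : ∑ i, indicatorVec S i ^ 2 = #S := by
  simp [indicatorVec]

end IndicatorVec

section QuadraticForm

variable {ι : Type*} [Fintype ι]

lemma Matrix.IsSymm.dotProduct_mulVec_comm {F : Matrix ι ι ℝ} (hF : F.IsSymm) (x y : ι → ℝ) :
    y ⬝ᵥ F *ᵥ x = x ⬝ᵥ F *ᵥ y := by
  rw [dotProduct_mulVec, ← mulVec_transpose, hF.eq, dotProduct_comm]

lemma Matrix.IsSymm.dotProduct_mulVec_sub_smul {F : Matrix ι ι ℝ} (hF : F.IsSymm)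
    (x y : ι → ℝ) (t : ℝ) :
    (x - t • y) ⬝ᵥ F *ᵥ (x - t • y) =
      x ⬝ᵥ F *ᵥ x - 2 * t * (x ⬝ᵥ F *ᵥ y) + t ^ 2 * (y ⬝ᵥ F *ᵥ y) := by
  simp only [mulVec_sub, mulVec_smul, dotProduct_sub, sub_dotProduct, dotProduct_smul,
    smul_dotProduct, smul_eq_mul, hF.dotProduct_mulVec_comm x y]
  ring

lemma dotProduct_mul_mul_mulVec_of_isSymm {D : Matrix ι ι ℝ} (hD : D.IsSymm)
    (F : Matrix ι ι ℝ) (x : ι → ℝ) :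
    x ⬝ᵥ (D * F * D) *ᵥ x = (D *ᵥ x) ⬝ᵥ F *ᵥ (D *ᵥ x) := by
  rw [← mulVec_mulVec, ← mulVec_mulVec, dotProduct_mulVec, ← mulVec_transpose, hD.eq]

lemma dotProduct_mulVec_le_of_sum_sq_mulVec_le {M : Matrix ι ι ℝ} {σ : ℝ} (hσ : 0 ≤ σ)
    {x : ι → ℝ} (h : ∑ i, (M *ᵥ x) i ^ 2 ≤ σ ^ 2 * ∑ i, x i ^ 2) :
    x ⬝ᵥ M *ᵥ x ≤ σ * ∑ i, x i ^ 2 := by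
  have hcs : (x ⬝ᵥ M *ᵥ x) ^ 2 ≤ (σ * ∑ i, x i ^ 2) ^ 2 :=
    calc (x ⬝ᵥ M *ᵥ x) ^ 2 ≤ (∑ i, x i ^ 2) * ∑ i, (M *ᵥ x) i ^ 2 :=
          sum_mul_sq_le_sq_mul_sq _ _ _
      _ ≤ (∑ i, x i ^ 2) * (σ ^ 2 * ∑ i, x i ^ 2) := by gcongr
      _ = (σ * ∑ i, x i ^ 2) ^ 2 := by ring
  exact (abs_le_of_sq_le_sq hcs (by positivity)).trans' (le_abs_self _)

end QuadraticForm

section Stochastic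

variable {ι : Type*} [Fintype ι] [DecidableEq ι] {F : Matrix ι ι ℝ}

lemma sum_sum_compl_eq_card_sub (hrow : ∀ i, ∑ j, F i j = 1) (S : Finset ι) :
    ∑ u ∈ S, ∑ v ∈ Sᶜ, F u v = #S - indicatorVec S ⬝ᵥ F *ᵥ indicatorVec S := by
  rw [indicatorVec_dotProduct_mulVec_indicatorVec, eq_sub_iff_add_eq, ← sum_add_distrib,
    card_eq_sum_ones, Nat.cast_sum, Nat.cast_one]
  refine sum_congr rfl fun u _ => ?_
  rw [add_comm, sum_add_sum_compl, hrow]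

lemma indicatorVec_dotProduct_mulVec_indicatorVec_le_card (hnn : ∀ i j, 0 ≤ F i j)
    (hrow : ∀ i, ∑ j, F i j = 1) (S A : Finset ι) :
    indicatorVec S ⬝ᵥ F *ᵥ indicatorVec A ≤ #S := by
  rw [indicatorVec_dotProduct_mulVec_indicatorVec, card_eq_sum_ones, Nat.cast_sum, Nat.cast_one]
  refine sum_le_sum fun u _ => ?_
  rw [← hrow u]
  exact sum_le_sum_of_subset_of_nonneg (subset_univ A) fun v _ _ => hnn u v

lemma indicatorVec_dotProduct_mulVec_indicatorVec_mono_left (hnn : ∀ i j, 0 ≤ F i j)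
    {S A : Finset ι} (h : S ⊆ A) (T : Finset ι) :
    indicatorVec S ⬝ᵥ F *ᵥ indicatorVec T ≤ indicatorVec A ⬝ᵥ F *ᵥ indicatorVec T := by
  simp only [indicatorVec_dotProduct_mulVec_indicatorVec]
  exact sum_le_sum_of_subset_of_nonneg h fun u _ _ => sum_nonneg fun v _ => hnn u v

end Stochastic

lemma DeltaA_eq (m : ℕ) (A : Finset (Fin m)) :
    DeltaA m A =
      diagonal (indicatorVec A) - (#A : ℝ)⁻¹ • vecMulVec (indicatorVec A) (indicatorVec A) :=
  rfl

lemma DeltaA_isSymm (m : ℕ) (A : Finset (Fin m)) : (DeltaA m A).IsSymm := by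
  rw [DeltaA_eq]
  refine (isSymm_diagonal _).sub (IsSymm.smul ?_ _)
  exact transpose_vecMulVec _ _

lemma DeltaA_mulVec_indicatorVec {m : ℕ} {S A : Finset (Fin m)} (h : S ⊆ A) :
    DeltaA m A *ᵥ indicatorVec S = indicatorVec S - (#S / #A : ℝ) • indicatorVec A := by
  have hSA : ∑ j ∈ S, indicatorVec A j = #S := by
    simp [indicatorVec, inter_eq_left.mpr h]
  ext i
  rw [DeltaA_eq, sub_mulVec, smul_mulVec, vecMulVec_mulVec, Pi.sub_apply, mulVec_diagonal,
    indicatorVec_mul_of_subset h, dotProduct_comm, indicatorVec_dotProduct, hSA]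
  simp only [op_smul_eq_smul, Pi.smul_apply, Pi.sub_apply, smul_eq_mul]
  ring

theorem stmt_10_general (m : ℕ) (F : Matrix (Fin m) (Fin m) ℝ) (hsym : F.IsSymm)
    (hnn : ∀ i j, 0 ≤ F i j) (hrow : ∀ i, ∑ j, F i j = 1)
    (A : Finset (Fin m))
    (hsv : ∀ x : Fin m → ℝ,
      ∑ i, (((DeltaA m A * F * DeltaA m A) *ᵥ x) i) ^ 2 ≤ (1 / 100) ^ 2 * ∑ i, (x i) ^ 2)
    (S : Finset (Fin m)) (hS : S ⊆ A)
    (hScard : (S.card : ℝ) ≤ (6 / 7) * A.card) :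
    (S.card : ℝ) / 100 ≤ ∑ u ∈ S, ∑ v ∈ Sᶜ, F u v := by
  set t : ℝ := #S / #A
  have hQ := dotProduct_mulVec_le_of_sum_sq_mulVec_le (by norm_num) (hsv (indicatorVec S))
  rw [dotProduct_mul_mul_mulVec_of_isSymm (DeltaA_isSymm m A), DeltaA_mulVec_indicatorVec hS,
    hsym.dotProduct_mulVec_sub_smul, sum_indicatorVec_sq] at hQ
  have ht : t ≤ 6 / 7 := div_le_of_le_mul₀ (by positivity) (by norm_num) hScard
  have ht0 : 0 ≤ t := by positivity
  have ha_le_s := indicatorVec_dotProduct_mulVec_indicatorVec_le_card hnn hrow S A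
  have ha_le_c := indicatorVec_dotProduct_mulVec_indicatorVec_mono_left hnn hS A
  rw [sum_sum_compl_eq_card_sub hrow]
  nlinarith [mul_le_mul_of_nonneg_left ha_le_c (sq_nonneg t),
    mul_le_mul_of_nonneg_right ha_le_s (by nlinarith : 0 ≤ t * (2 - t)),
    mul_nonneg (Nat.cast_nonneg (α := ℝ) #S) (by nlinarith : (0 : ℝ) ≤ (1 - t) ^ 2 - 1 / 49)]

/-- Estimating expansion: if `F` is symmetric doubly stochastic and the largest
singular value (operator 2-norm) of `Δ_A·F·Δ_A` is at most `1/100`, then every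
nonempty `S ⊆ A` with `|S| ≤ (6/7)|A|` has weighted cut `Σ_{u∈S, v∉S} F(u,v) ≥ |S|/100`;
i.e. `A` is a strong near `(6/7, 1/100)`-edge-expander in the weighted graph `F`. -/
theorem stmt_10 (m : ℕ) (hm : 1 ≤ m) (F : Matrix (Fin m) (Fin m) ℝ) (hsym : F.IsSymm)
    (hnn : ∀ i j, 0 ≤ F i j) (hrow : ∀ i, ∑ j, F i j = 1) (hcol : ∀ j, ∑ i, F i j = 1)
    (A : Finset (Fin m)) (hA : A.Nonempty)
    (hsv : ∀ x : Fin m → ℝ,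
      ∑ i, (((DeltaA m A * F * DeltaA m A) *ᵥ x) i) ^ 2 ≤ (1 / 100) ^ 2 * ∑ i, (x i) ^ 2)
    (S : Finset (Fin m)) (hS : S ⊆ A) (hSne : S.Nonempty)
    (hScard : (S.card : ℝ) ≤ (6 / 7) * A.card) :
    (S.card : ℝ) / 100 ≤ ∑ u ∈ S, ∑ v ∈ Sᶜ, F u v :=
  stmt_10_general m F hsym hnn hrow A hsv S hS hScard
end

section
/- Let F be a doubly stochastic m×m real matrix, let S ⊆ A ⊆ [m] with A nonempty, and set k = |A|, ℓ = |S|, μ(u) = (1/k)·Σ_{v∈A} F(u,v) for u ∈ [m], and σ = Σ_{u∈A} Σ_{v∈A} F(u,v). Then Σ_{u∈S} Σ_{v∈S} (μ(u) + μ(v) − σ/k²) ≤ ℓ·(ℓ/k)·(2 − ℓ/k). -/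
/-!
Write `P = ∑_{u∈S} ∑_{w∈A} F u w`. The left-hand side equals `2ℓP/k - ℓ²σ/k²`, where
`P ≤ σ` by nonnegativity and `S ⊆ A`, and `P ≤ ℓ` because the rows sum to `1`.
Multiplying by `k²/ℓ`, it remains to see `0 ≤ 2k(ℓ - P) + ℓ(σ - ℓ)`, which is clear if `σ ≥ ℓ`;
if `σ < ℓ` it is `2k(σ - P) + (2k - ℓ)(ℓ - σ) ≥ 0`.
-/

open Finset

theorem sum_sum_add_sub_const {ι : Type*} (S : Finset ι) (f : ι → ℝ) (d : ℝ) :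
    ∑ u ∈ S, ∑ v ∈ S, (f u + f v - d) = 2 * #S * ∑ u ∈ S, f u - #S ^ 2 * d := by
  simp only [sum_add_distrib, sum_sub_distrib, sum_const, nsmul_eq_mul, ← mul_sum]
  ring

theorem sum_sum_le_card_of_row_sum_eq_one {ι κ : Type*} [Fintype κ] (F : ι → κ → ℝ)
    (hnn : ∀ i j, 0 ≤ F i j) (hrow : ∀ i, ∑ j, F i j = 1) (S : Finset ι) (A : Finset κ) :
    ∑ u ∈ S, ∑ w ∈ A, F u w ≤ #S :=
  calc ∑ u ∈ S, ∑ w ∈ A, F u w ≤ ∑ _u ∈ S, (1 : ℝ) :=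
        sum_le_sum fun u _ => (sum_le_univ_sum_of_nonneg (hnn u)).trans_eq (hrow u)
    _ = #S := by simp

theorem two_mul_mul_div_sub_le {k l P σ : ℝ} (hl : 0 ≤ l) (hlk : l ≤ k) (hPσ : P ≤ σ)
    (hPl : P ≤ l) :
    2 * l * (k⁻¹ * P) - l ^ 2 * (σ / k ^ 2) ≤ l * (l / k) * (2 - l / k) := by
  obtain rfl | hl := hl.eq_or_lt
  · simp
  have hk : 0 < k := hl.trans_le hlk
  have key : 0 ≤ 2 * k * (l - P) + l * (σ - l) := by
    rcases le_total l σ with h | h <;> nlinarith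
  have hdiff : l * (l / k) * (2 - l / k) - (2 * l * (k⁻¹ * P) - l ^ 2 * (σ / k ^ 2))
      = l * (2 * k * (l - P) + l * (σ - l)) / k ^ 2 := by
    field_simp
    ring
  have : 0 ≤ l * (2 * k * (l - P) + l * (σ - l)) / k ^ 2 := by positivity
  linarith

theorem stmt_11_general (m : ℕ) (F : Matrix (Fin m) (Fin m) ℝ)
    (hnn : ∀ i j, 0 ≤ F i j) (hrow : ∀ i, ∑ j, F i j = 1)
    (A S : Finset (Fin m)) (hSA : S ⊆ A) :
    ∑ u ∈ S, ∑ v ∈ S,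
        ((A.card : ℝ)⁻¹ * (∑ w ∈ A, F u w) + (A.card : ℝ)⁻¹ * (∑ w ∈ A, F v w)
          - (∑ a ∈ A, ∑ b ∈ A, F a b) / (A.card : ℝ) ^ 2)
      ≤ (S.card : ℝ) * ((S.card : ℝ) / (A.card : ℝ)) * (2 - (S.card : ℝ) / (A.card : ℝ)) := by
  rw [sum_sum_add_sub_const, ← mul_sum]
  refine two_mul_mul_div_sub_le (by positivity) (mod_cast card_le_card hSA) ?_
    (sum_sum_le_card_of_row_sum_eq_one F hnn hrow S A)
  exact sum_le_sum_of_subset_of_nonneg hSA fun i _ _ => sum_nonneg fun j _ => hnn i j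

/-- For a doubly stochastic `F`, `S ⊆ A ⊆ [m]` with `A` nonempty, `k = |A|`,
`ℓ = |S|`, `μ(u) = (1/k)·Σ_{v∈A} F(u,v)` and `σ = Σ_{u∈A}Σ_{v∈A} F(u,v)`, we have
`Σ_{u∈S}Σ_{v∈S} (μ(u) + μ(v) − σ/k²) ≤ ℓ·(ℓ/k)·(2 − ℓ/k)`. -/
theorem stmt_11 (m : ℕ) (F : Matrix (Fin m) (Fin m) ℝ)
    (hnn : ∀ i j, 0 ≤ F i j) (hrow : ∀ i, ∑ j, F i j = 1) (hcol : ∀ j, ∑ i, F i j = 1)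
    (A S : Finset (Fin m)) (hSA : S ⊆ A) (hA : A.Nonempty) :
    ∑ u ∈ S, ∑ v ∈ S,
        ((A.card : ℝ)⁻¹ * (∑ w ∈ A, F u w) + (A.card : ℝ)⁻¹ * (∑ w ∈ A, F v w)
          - (∑ a ∈ A, ∑ b ∈ A, F a b) / (A.card : ℝ) ^ 2)
      ≤ (S.card : ℝ) * ((S.card : ℝ) / (A.card : ℝ)) * (2 - (S.card : ℝ) / (A.card : ℝ)) :=
  stmt_11_general m F hnn hrow A S hSA
end

section
/- Let G = (V,E) be a simple graph and let G_E = (V' = V ∪ X_E, E') be its subdivision graph. Let S ⊆ V' be a cut that respects the subdivision of G. Then vol_G(S ∩ V) ≤ vol_{G_E}(S) ≤ 3·vol_G(S ∩ V). -/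
open scoped Classical

/-- The subdivision graph of `G`: vertices are the original (regular) vertices
together with one split node per edge, and each edge `{u,v}` of `G` is replaced by
the two edges `{u, x_e}` and `{v, x_e}`. -/
def Subdivision {V : Type*} (G : SimpleGraph V) : SimpleGraph (V ⊕ G.edgeSet) where
  Adj x y := ∃ (u : V) (e : G.edgeSet), u ∈ (e : Sym2 V) ∧
    ((x = Sum.inl u ∧ y = Sum.inr e) ∨ (x = Sum.inr e ∧ y = Sum.inl u))
  symm := by
    constructor
    rintro x y ⟨u, e, hu, (⟨hx, hy⟩ | ⟨hx, hy⟩)⟩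
    · exact ⟨u, e, hu, Or.inr ⟨hy, hx⟩⟩
    · exact ⟨u, e, hu, Or.inl ⟨hy, hx⟩⟩
  loopless := by
    constructor
    rintro x ⟨u, e, hu, (⟨hx, hy⟩ | ⟨hx, hy⟩)⟩ <;> subst hx <;> simp_all

/-- The volume of a finite set of vertices: the sum of their degrees. -/
noncomputable def vol {α : Type*} [Fintype α] (H : SimpleGraph α) (S : Finset α) : ℕ :=
  ∑ x ∈ S, H.degree x

/-- The number of edges of `H` with one endpoint in `S` and the other outside `S`. -/
noncomputable def crossCount {α : Type*} [Fintype α] (H : SimpleGraph α) (S : Finset α) : ℕ :=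
  (H.edgeFinset.filter (fun e => (∃ u ∈ e, u ∈ S) ∧ (∃ u ∈ e, u ∉ S))).card

/-- A set `S` of vertices of the subdivision graph respects the subdivision of `G`
if every split node both of whose neighbors are in `S` is itself in `S`, and
every split node both of whose neighbors are outside `S` is itself outside `S`. -/
def RespectsSubdivision {V : Type*} (G : SimpleGraph V)
    (S : Finset (V ⊕ G.edgeSet)) : Prop :=
  ∀ (u v : V) (h : G.Adj u v),
    ((Sum.inl u ∈ S ∧ Sum.inl v ∈ S) → Sum.inr ⟨s(u,v), G.mem_edgeSet.mpr h⟩ ∈ S) ∧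
    ((Sum.inl u ∉ S ∧ Sum.inl v ∉ S) → Sum.inr ⟨s(u,v), G.mem_edgeSet.mpr h⟩ ∉ S)

/-- The set of regular (original) vertices of `G` belonging to a set `S` of
vertices of the subdivision graph. -/
noncomputable def regularPart {V : Type*} [Fintype V] (G : SimpleGraph V)
    (S : Finset (V ⊕ G.edgeSet)) : Finset V :=
  Finset.univ.filter (fun u => Sum.inl u ∈ S)

/-!
A split node has degree 2 in `G_E` and a regular vertex keeps its degree, so
`vol_{G_E}(S) = vol_G(S ∩ V) + 2·|S ∩ X_E|`. Since `S` respects the subdivision, every split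
node `x_e ∈ S` has an endpoint of `e` in `S ∩ V`, so `e ↦ x_e` embeds `S ∩ X_E` into the edges
incident to `S ∩ V`, of which there are at most `vol_G(S ∩ V)`.
-/

open Finset SimpleGraph

namespace Subdivision

variable {V : Type*} (G : SimpleGraph V)

lemma adj_inl_iff {u : V} {y : V ⊕ G.edgeSet} :
    (Subdivision G).Adj (.inl u) y ↔ ∃ e : G.edgeSet, u ∈ (e : Sym2 V) ∧ y = .inr e := by
  constructor
  · rintro ⟨w, e, hw, ⟨hx, rfl⟩ | ⟨hx, -⟩⟩
    · cases hx; exact ⟨e, hw, rfl⟩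
    · cases hx
  · rintro ⟨e, hu, rfl⟩
    exact ⟨u, e, hu, .inl ⟨rfl, rfl⟩⟩

lemma adj_inr_iff {e : G.edgeSet} {y : V ⊕ G.edgeSet} :
    (Subdivision G).Adj (.inr e) y ↔ ∃ w : V, w ∈ (e : Sym2 V) ∧ y = .inl w := by
  constructor
  · rintro ⟨w, e', hw, ⟨hx, -⟩ | ⟨hx, rfl⟩⟩
    · cases hx
    · cases hx; exact ⟨w, hw, rfl⟩
  · rintro ⟨w, hw, rfl⟩
    exact ⟨w, e, hw, .inr ⟨rfl, rfl⟩⟩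

variable [Fintype V]

lemma degree_inl (u : V) : (Subdivision G).degree (.inl u) = G.degree u := by
  have hnbr : (Subdivision G).neighborFinset (.inl u) =
      ((G.incidenceFinset u).subtype (· ∈ G.edgeSet)).map .inr := by
    ext y
    simp [adj_inl_iff, incidenceSet, eq_comm]
  rw [← card_neighborFinset_eq_degree, hnbr, card_map, card_subtype,
    ← card_incidenceFinset_eq_degree,
    filter_true_of_mem fun e he => G.incidenceSet_subset u ((G.mem_incidenceFinset u e).mp he)]

lemma degree_inr (e : G.edgeSet) : (Subdivision G).degree (.inr e) = 2 := by
  obtain ⟨e, he⟩ := e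
  induction e using Sym2.ind with
  | _ u v =>
    have hnbr : (Subdivision G).neighborFinset (.inr ⟨s(u, v), he⟩) = {.inl u, .inl v} := by
      ext y
      simp [adj_inr_iff]
    rw [← card_neighborFinset_eq_degree, hnbr, card_pair (by simpa using (G.mem_edgeSet.mp he).ne)]

lemma vol_eq_add_two_mul_card_toRight (S : Finset (V ⊕ G.edgeSet)) :
    vol (Subdivision G) S = vol G S.toLeft + 2 * #S.toRight := by
  simp [vol, sum_sum_eq_sum_toLeft_add_sum_toRight, degree_inl, degree_inr, mul_comm]

end Subdivision

lemma regularPart_eq_toLeft {V : Type*} [Fintype V] (G : SimpleGraph V)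
    (S : Finset (V ⊕ G.edgeSet)) : regularPart G S = S.toLeft := by
  ext u
  simp [regularPart]

lemma SimpleGraph.card_le_vol_of_forall_exists_mem {V : Type*} [Fintype V] (G : SimpleGraph V)
    {F : Finset (Sym2 V)} {A : Finset V} (hFG : ∀ e ∈ F, e ∈ G.edgeSet)
    (hFA : ∀ e ∈ F, ∃ u ∈ A, u ∈ e) : #F ≤ vol G A :=
  calc #F ≤ #(A.biUnion (G.incidenceFinset ·)) := card_le_card fun e he => by
        obtain ⟨u, hu, hue⟩ := hFA e he
        exact mem_biUnion.mpr ⟨u, hu, (G.mem_incidenceFinset u e).mpr ⟨hFG e he, hue⟩⟩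
    _ ≤ ∑ u ∈ A, #(G.incidenceFinset u) := card_biUnion_le
    _ = vol G A := by simp only [card_incidenceFinset_eq_degree, vol]

lemma RespectsSubdivision.exists_mem_of_inr_mem {V : Type*} {G : SimpleGraph V}
    {S : Finset (V ⊕ G.edgeSet)} (hS : RespectsSubdivision G S) {e : G.edgeSet}
    (he : .inr e ∈ S) : ∃ u ∈ (e : Sym2 V), .inl u ∈ S := by
  obtain ⟨e, he'⟩ := e
  induction e using Sym2.ind with
  | _ u v =>
    by_contra! h
    exact (hS u v he').2 ⟨h u (Sym2.mem_mk_left u v), h v (Sym2.mem_mk_right u v)⟩ he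

lemma RespectsSubdivision.card_toRight_le_vol {V : Type*} [Fintype V] {G : SimpleGraph V}
    {S : Finset (V ⊕ G.edgeSet)} (hS : RespectsSubdivision G S) :
    #S.toRight ≤ vol G S.toLeft := by
  rw [← card_map (.subtype _)]
  refine G.card_le_vol_of_forall_exists_mem ?_ ?_ <;> intro e he <;>
    obtain ⟨e, heS, rfl⟩ := mem_map.mp he
  · exact e.2
  · obtain ⟨u, hue, hu⟩ := hS.exists_mem_of_inr_mem (mem_toRight.mp heS)
    exact ⟨u, mem_toLeft.mpr hu, hue⟩

/-- If `S` is a cut in the subdivision graph `G_E` that respects the subdivision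
of `G`, then `vol_G(S ∩ V) ≤ vol_{G_E}(S) ≤ 3·vol_G(S ∩ V)`. -/
theorem stmt_13 {V : Type*} [Fintype V] (G : SimpleGraph V)
    (S : Finset (V ⊕ G.edgeSet)) (hresp : RespectsSubdivision G S) :
    vol G (regularPart G S) ≤ vol (Subdivision G) S ∧
      vol (Subdivision G) S ≤ 3 * vol G (regularPart G S) := by
  rw [regularPart_eq_toLeft, Subdivision.vol_eq_add_two_mul_card_toRight]
  have hsplit := hresp.card_toRight_le_vol
  omega
end

section
/- Let G = (V,E) be a simple graph and let G_E = (V' = V ∪ X_E, E') be its subdivision graph. Let A ⊆ V' be a subset with vol_{G_E}(V' ∖ A) ≤ (1/2)·vol_{G_E}(A). Then vol_{G_E}(A) ≤ 8·|A ∩ X_E| ≤ 8·|A|. -/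
open scoped Classical

open Finset

theorem vol_le_vol_compl_of_isIndepSet {α : Type*} [Fintype α] [DecidableEq α] (H : SimpleGraph α)
    {S : Finset α} (hS : H.IsIndepSet (S : Set α)) : vol H S ≤ vol H Sᶜ := by
  have hdeg : ∀ x ∈ S, H.degree x = #(Sᶜ.bipartiteAbove H.Adj x) := by
    intro x hx
    rw [← H.card_neighborFinset_eq_degree]
    congr 1
    ext y
    simp only [SimpleGraph.mem_neighborFinset, mem_bipartiteAbove, mem_compl]
    exact ⟨fun hxy => ⟨fun hy => hS hx hy hxy.ne hxy, hxy⟩, And.right⟩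
  calc vol H S = ∑ x ∈ S, #(Sᶜ.bipartiteAbove H.Adj x) := sum_congr rfl hdeg
    _ = ∑ y ∈ Sᶜ, #(S.bipartiteBelow H.Adj y) :=
      sum_card_bipartiteAbove_eq_sum_card_bipartiteBelow _
    _ ≤ vol H Sᶜ := sum_le_sum fun y _ => by
      rw [← H.card_neighborFinset_eq_degree]
      refine card_le_card fun x hx => ?_
      exact (H.mem_neighborFinset y x).2 ((mem_bipartiteBelow _).1 hx).2.symm

section Subdivision

variable {V : Type*} (G : SimpleGraph V)

theorem subdivision_not_adj_inl_inl (u v : V) :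
    ¬ (Subdivision G).Adj (Sum.inl u) (Sum.inl v) := by
  rintro ⟨w, e, hw, (⟨h1, h2⟩ | ⟨h1, h2⟩)⟩ <;> simp_all

theorem isIndepSet_subdivision_of_isLeft {S : Set (V ⊕ G.edgeSet)}
    (hS : ∀ x ∈ S, x.isLeft) : (Subdivision G).IsIndepSet S := by
  intro x hx y hy _
  obtain ⟨u, rfl⟩ := Sum.isLeft_iff.1 (hS x hx)
  obtain ⟨v, rfl⟩ := Sum.isLeft_iff.1 (hS y hy)
  exact subdivision_not_adj_inl_inl G u v

theorem subdivision_degree_inr [Fintype V] (e : G.edgeSet) :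
    (Subdivision G).degree (Sum.inr e) = 2 := by
  obtain ⟨e, he⟩ := e
  induction e using Sym2.ind with
  | _ a b =>
    have hnbrs : (Subdivision G).neighborFinset (Sum.inr ⟨s(a, b), he⟩) =
        {Sum.inl a, Sum.inl b} := by
      ext y
      simp only [SimpleGraph.mem_neighborFinset, mem_insert, mem_singleton]
      constructor
      · rintro ⟨u, e', hu, (⟨h1, h2⟩ | ⟨h1, rfl⟩)⟩
        · simp at h1
        · obtain rfl := Sum.inr_injective h1
          simpa using hu
      · rintro (rfl | rfl)
        · exact ⟨a, _, Sym2.mem_mk_left a b, Or.inr ⟨rfl, rfl⟩⟩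
        · exact ⟨b, _, Sym2.mem_mk_right a b, Or.inr ⟨rfl, rfl⟩⟩
    rw [← SimpleGraph.card_neighborFinset_eq_degree, hnbrs,
      card_pair (by simpa using (G.mem_edgeSet.1 he).ne)]

variable [Fintype V]

theorem vol_subdivision_filter_isRight (A : Finset (V ⊕ G.edgeSet)) :
    vol (Subdivision G) (A.filter fun x => x.isRight) = 2 * #(A.filter fun x => x.isRight) := by
  rw [vol, sum_congr rfl fun x hx => ?_, sum_const, smul_eq_mul, mul_comm]
  obtain ⟨e, rfl⟩ := Sum.isRight_iff.1 (mem_filter.1 hx).2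
  exact subdivision_degree_inr G e

/-- The regular vertices of `A` form an independent set, so their volume is at most that of
their complement: the split nodes of `A` together with `Aᶜ`. -/
theorem vol_subdivision_le (A : Finset (V ⊕ G.edgeSet)) :
    vol (Subdivision G) A ≤
      4 * #(A.filter fun x => x.isRight) + vol (Subdivision G) Aᶜ := by
  set X := A.filter fun x => x.isRight
  have hXA : X ⊆ A := filter_subset _ A
  have hregular : vol (Subdivision G) (A \ X) ≤ vol (Subdivision G) (X ∪ Aᶜ) := by
    rw [show X ∪ Aᶜ = (A \ X)ᶜ by rw [compl_sdiff, himp_eq]; rfl]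
    refine vol_le_vol_compl_of_isIndepSet _ (isIndepSet_subdivision_of_isLeft G fun x hx => ?_)
    obtain ⟨hxA, hxX⟩ := mem_sdiff.1 hx
    simpa [X, hxA] using hxX
  have hsplit : vol (Subdivision G) A = vol (Subdivision G) (A \ X) + vol (Subdivision G) X :=
    (sum_sdiff hXA).symm
  have hunion : vol (Subdivision G) (X ∪ Aᶜ) = vol (Subdivision G) X + vol (Subdivision G) Aᶜ :=
    sum_union (disjoint_of_subset_left hXA disjoint_compl_right)
  have hX : vol (Subdivision G) X = 2 * #X := vol_subdivision_filter_isRight G A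
  omega

end Subdivision

/-- If `A` is a set of vertices of the subdivision graph `G_E` with
`vol_{G_E}(V' ∖ A) ≤ (1/2)·vol_{G_E}(A)`, then
`vol_{G_E}(A) ≤ 8·|A ∩ X_E| ≤ 8·|A|`. -/
theorem stmt_16 {V : Type*} [Fintype V] (G : SimpleGraph V)
    (A : Finset (V ⊕ G.edgeSet))
    (hvol : (vol (Subdivision G) Aᶜ : ℝ) ≤ (1 / 2) * (vol (Subdivision G) A : ℝ)) :
    (vol (Subdivision G) A : ℝ) ≤ 8 * ((A.filter (fun x => x.isRight)).card : ℝ) ∧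
      8 * ((A.filter (fun x => x.isRight)).card : ℝ) ≤ 8 * (A.card : ℝ) := by
  have hkey : (vol (Subdivision G) A : ℝ) ≤
      4 * ((A.filter (fun x => x.isRight)).card : ℝ) + (vol (Subdivision G) Aᶜ : ℝ) := by
    exact_mod_cast vol_subdivision_le G A
  have hcard : ((A.filter (fun x => x.isRight)).card : ℝ) ≤ (A.card : ℝ) := by
    exact_mod_cast card_filter_le A _
  constructor <;> linarith
end
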